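/- arXiv:2202.02672 — 2 statements merged into one kernel-verified Lean document; each statement's English description precedes it below -/
import Mathlib

section
/- If every separable mixed manna instance whose pure bads are identically ordered (IDO) admits a PropMX allocation, then every separable mixed manna instance admits a PropMX allocation. Likewise, if every separable mixed manna instance with IDO pure bads admits a PropMX0 allocation, then every separable mixed manna instance admits a PropMX0 allocation. -/
open scoped Classical
open Finset

noncomputable section FairDivision

variable {N I : Type*}

/-- Additive value of agent `i` for a bundle `S`. -/
def bval (v : N → I → ℝ) (i : N) (S : Finset I) : ℝ := ∑ j ∈ S, v i j

/-- `x` is an allocation of the item set `S`: the bundles are pairwise disjoint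
and together cover exactly `S`. -/
def IsAllocation [Fintype N] (x : N → Finset I) (S : Finset I) : Prop :=
  (∀ i h : N, i ≠ h → Disjoint (x i) (x h)) ∧ Finset.univ.biUnion x = S

/-- Envy-freeness up to any item (mixed manna version). -/
def EFX (v : N → I → ℝ) (x : N → Finset I) : Prop :=
  ∀ i h : N,
    (∀ g ∈ x h, 0 < v i g → bval v i (x i) ≥ bval v i ((x h).erase g)) ∨
    (∀ c ∈ x i, v i c < 0 → bval v i ((x i).erase c) ≥ bval v i (x h))

/-- The stronger notion EFX₀, where goods of zero value are also considered. -/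
def EFX0 (v : N → I → ℝ) (x : N → Finset I) : Prop :=
  ∀ i h : N,
    (∀ g ∈ x h, 0 ≤ v i g → bval v i (x i) ≥ bval v i ((x h).erase g)) ∨
    (∀ c ∈ x i, v i c < 0 → bval v i ((x i).erase c) ≥ bval v i (x h))

/-- `dpos v x i`: the maximin good value `d_i(x)`: the maximum, over agents `h ≠ i`
whose bundle contains an item valued positively by `i`, of the minimum value
(for `i`) of such an item in `x h`; `0` if no such agent exists. -/
def dpos [Fintype N] (v : N → I → ℝ) (x : N → Finset I) (i : N) : ℝ :=
  if hA : (Finset.univ.filter fun h =>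
      h ≠ i ∧ ((x h).filter fun j => 0 < v i j).Nonempty).Nonempty then
    (Finset.univ.filter fun h =>
        h ≠ i ∧ ((x h).filter fun j => 0 < v i j).Nonempty).sup' hA fun h =>
      if hB : ((x h).filter fun j => 0 < v i j).Nonempty then
        ((x h).filter fun j => 0 < v i j).inf' hB fun j => v i j
      else 0
  else 0

/-- `dnn v x i`: the variant `d⁰_i(x)` of the maximin good value where
nonnegatively-valued items are considered. -/
def dnn [Fintype N] (v : N → I → ℝ) (x : N → Finset I) (i : N) : ℝ :=
  if hA : (Finset.univ.filter fun h =>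
      h ≠ i ∧ ((x h).filter fun j => 0 ≤ v i j).Nonempty).Nonempty then
    (Finset.univ.filter fun h =>
        h ≠ i ∧ ((x h).filter fun j => 0 ≤ v i j).Nonempty).sup' hA fun h =>
      if hB : ((x h).filter fun j => 0 ≤ v i j).Nonempty then
        ((x h).filter fun j => 0 ≤ v i j).inf' hB fun j => v i j
      else 0
  else 0

/-- Proportional share of agent `i`. -/
def propShare [Fintype N] (v : N → I → ℝ) (M : Finset I) (i : N) : ℝ :=
  bval v i M / (Fintype.card N : ℝ)

/-- Proportionality up to the maximin good or any bad. -/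
def PropMX [Fintype N] (v : N → I → ℝ) (M : Finset I) (x : N → Finset I) : Prop :=
  ∀ i : N,
    bval v i (x i) + dpos v x i ≥ propShare v M i ∨
    (∀ c ∈ x i, v i c < 0 → bval v i ((x i).erase c) ≥ propShare v M i)

/-- The stronger notion PropMX₀. -/
def PropMX0 [Fintype N] (v : N → I → ℝ) (M : Finset I) (x : N → Finset I) : Prop :=
  ∀ i : N,
    bval v i (x i) + dnn v x i ≥ propShare v M i ∨
    (∀ c ∈ x i, v i c < 0 → bval v i ((x i).erase c) ≥ propShare v M i)

/-- Utilitarian social welfare. -/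
def SW [Fintype N] (v : N → I → ℝ) (x : N → Finset I) : ℝ :=
  ∑ i : N, bval v i (x i)

/-- `y` Pareto-dominates `x`. -/
def ParetoDominates [Fintype N] (v : N → I → ℝ) (y x : N → Finset I) : Prop :=
  (∀ i : N, bval v i (y i) ≥ bval v i (x i)) ∧ ∃ h : N, bval v h (y h) > bval v h (x h)

/-- `x` is Pareto-optimal among allocations of `M`. -/
def ParetoOptimal [Fintype N] (v : N → I → ℝ) (M : Finset I) (x : N → Finset I) : Prop :=
  ¬ ∃ y : N → Finset I, IsAllocation y M ∧ ParetoDominates v y x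

/-- `x` maximizes the social welfare over all allocations of `M`. -/
def MaxSW [Fintype N] (v : N → I → ℝ) (M : Finset I) (x : N → Finset I) : Prop :=
  ∀ y : N → Finset I, IsAllocation y M → SW v y ≤ SW v x

/-- A set `B` of (pure bad) items is identically ordered (IDO): it can be enumerated
as `c₁, …, c_k` with `v i c₁ ≤ v i c₂ ≤ … ≤ v i c_k` for every agent `i`. -/
def IDO (v : N → I → ℝ) (B : Finset I) : Prop :=
  ∃ l : List I, l.Nodup ∧ l.toFinset = B ∧ ∀ i : N, (l.map (v i)).Pairwise (· ≤ ·)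

end FairDivision

/-! Replace every agent's values on the pure bads `B` by the same values, sorted decreasingly
along one fixed enumeration of `B`. The new instance is separable and IDO and has the same
proportional shares, so it has an allocation `x'` of the required kind. Now let the owners of
the slots of `B`, in the order of the enumeration, pick their favourite remaining bad. When
slot `t` is served at most `t` bads beat the pick of its owner, so she values the pick at least
at her `t`-th largest value, which is what the slot was worth to her in `x'`. Goods stay
where they are, so no bundle loses value, the maximin good values do not change, and removing
a bad from a new bundle leaves at least what removing the corresponding slot left in `x'`. -/

noncomputable section IDOReduction

variable {N I : Type*}

/-- `dpos` and `dnn` are, definitionally, the cases `P = (0 < ·)` and `P = (0 ≤ ·)`. -/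
def maximinGood [Fintype N] (P : ℝ → Prop) [DecidablePred P] (v : N → I → ℝ)
    (x : N → Finset I) (i : N) : ℝ :=
  if hA : (Finset.univ.filter fun h =>
      h ≠ i ∧ ((x h).filter fun j => P (v i j)).Nonempty).Nonempty then
    (Finset.univ.filter fun h =>
        h ≠ i ∧ ((x h).filter fun j => P (v i j)).Nonempty).sup' hA fun h =>
      if hB : ((x h).filter fun j => P (v i j)).Nonempty then
        ((x h).filter fun j => P (v i j)).inf' hB fun j => v i j
      else 0
  else 0

def PropMXWith [Fintype N] (P : ℝ → Prop) [DecidablePred P] (v : N → I → ℝ) (M : Finset I)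
    (x : N → Finset I) : Prop :=
  ∀ i : N,
    bval v i (x i) + maximinGood P v x i ≥ propShare v M i ∨
    (∀ c ∈ x i, v i c < 0 → bval v i ((x i).erase c) ≥ propShare v M i)

theorem maximinGood_congr [Fintype N] {P : ℝ → Prop} [DecidablePred P] {v v' : N → I → ℝ}
    {x x' : N → Finset I} {i : N}
    (hgoods : ∀ h, {j ∈ x h | P (v i j)} = {j ∈ x' h | P (v' i j)})
    (hval : ∀ j, P (v i j) → v i j = v' i j) :
    maximinGood P v x i = maximinGood P v' x' i := by
  unfold maximinGood
  simp only [hgoods]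
  split_ifs with hA
  · refine sup'_congr hA rfl fun h _ => ?_
    split_ifs with hB
    · refine inf'_congr hB rfl fun j hj => ?_
      rw [← hgoods] at hj
      exact hval j (mem_filter.mp hj).2
    · rfl
  · rfl

theorem Equiv.Perm.apply_mem_of_forall_notMem {σ : Equiv.Perm I} {B : Finset I}
    (hσ : ∀ j ∉ B, σ j = j) {j : I} (hj : j ∈ B) : σ j ∈ B := by
  by_contra h
  rw [σ.injective (hσ _ h)] at h
  exact h hj

section Allocation

variable [Fintype N] {x : N → Finset I} {S : Finset I}

theorem IsAllocation.exists_mem (hx : IsAllocation x S) {j : I} (hj : j ∈ S) :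
    ∃ i, j ∈ x i := by
  simpa [← hx.2] using hj

theorem IsAllocation.eq_of_mem (hx : IsAllocation x S) {i i' : N} {j : I} (hi : j ∈ x i)
    (hi' : j ∈ x i') : i = i' := by
  by_contra hne
  exact disjoint_left.mp (hx.1 i i' hne) hi hi'

theorem IsAllocation.map_perm (hx : IsAllocation x S) (σ : Equiv.Perm I)
    (hσ : ∀ j ∈ S, σ j ∈ S) : IsAllocation (fun i => (x i).map σ.toEmbedding) S := by
  refine ⟨fun i h hne => (disjoint_map _).mpr (hx.1 i h hne), ?_⟩
  have hS : S.map σ.toEmbedding = S := map_eq_of_subset fun j hj => by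
    obtain ⟨a, ha, rfl⟩ := mem_map.mp hj
    exact hσ a ha
  rw [← hS, ← hx.2]
  ext j
  simp

end Allocation

theorem PropMXWith.map_perm [Fintype N] {P : ℝ → Prop} [DecidablePred P] (hP : ∀ r < 0, ¬ P r)
    {v v' : N → I → ℝ} {M B : Finset I} {x' : N → Finset I} {σ : Equiv.Perm I}
    (hσ : ∀ j ∉ B, σ j = j) (hv : ∀ i, ∀ j ∉ B, v' i j = v i j)
    (hneg : ∀ i, ∀ j ∈ B, v i j < 0) (hneg' : ∀ i, ∀ j ∈ B, v' i j < 0)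
    (hshare : ∀ i, propShare v' M i = propShare v M i)
    (hle : ∀ i, ∀ c ∈ x' i, v' i c ≤ v i (σ c)) (h : PropMXWith P v' M x') :
    PropMXWith P v M fun i => (x' i).map σ.toEmbedding := by
  have hbval : ∀ i, ∀ S ⊆ x' i, bval v' i S ≤ bval v i (S.map σ.toEmbedding) :=
    fun i S hS => by
      rw [bval, bval, sum_map]
      exact sum_le_sum fun c hc => hle i c (hS hc)
  have hgood : ∀ i j, P (v i j) → j ∉ B := fun i j hP' hj => hP _ (hneg i j hj) hP'
  have hgood' : ∀ i j, P (v' i j) → j ∉ B := fun i j hP' hj => hP _ (hneg' i j hj) hP'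
  have hgoods : ∀ i h,
      {j ∈ (x' h).map σ.toEmbedding | P (v i j)} = {j ∈ x' h | P (v' i j)} := by
    intro i h
    ext j
    simp only [mem_filter, mem_map_equiv]
    constructor
    · rintro ⟨hj, hPj⟩
      have hσj : σ.symm j = j := by
        rw [Equiv.symm_apply_eq, hσ j (hgood i j hPj)]
      rw [hσj] at hj
      exact ⟨hj, hv i j (hgood i j hPj) ▸ hPj⟩
    · rintro ⟨hj, hPj⟩
      have hσj : σ.symm j = j := by
        rw [Equiv.symm_apply_eq, hσ j (hgood' i j hPj)]
      rw [hσj]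
      exact ⟨hj, hv i j (hgood' i j hPj) ▸ hPj⟩
  intro i
  rcases h i with hmx | hbad
  · left
    rw [maximinGood_congr (hgoods i) fun j hPj => (hv i j (hgood i j hPj)).symm, ← hshare]
    linarith [hbval i _ subset_rfl]
  · right
    intro c hc hcneg
    obtain ⟨a, ha, rfl⟩ := mem_map.mp hc
    rw [← map_erase, ← hshare]
    exact (hbad a ha ((hle i a ha).trans_lt hcneg)).trans (hbval i _ (erase_subset a _))

theorem exists_greedy_picks (R : Finset I) : ∀ {k : ℕ} (w : Fin k → I → ℝ), k ≤ #R →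
    ∃ p : Fin k → I, Function.Injective p ∧ (∀ t, p t ∈ R) ∧
      ∀ t, #{b ∈ R | w t (p t) < w t b} ≤ t
  | 0, _, _ => ⟨Fin.elim0, fun a => a.elim0, fun t => t.elim0, fun t => t.elim0⟩
  | k + 1, w, hk => by
    obtain ⟨p, hinj, hpR, hp⟩ := exists_greedy_picks R (fun t => w t.castSucc) (by omega)
    have hpicked : univ.image p ⊆ R := by simpa [image_subset_iff] using hpR
    have hrest : (R \ univ.image p).Nonempty := by
      rw [← card_pos, card_sdiff_of_subset hpicked, card_image_of_injective _ hinj, card_univ,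
        Fintype.card_fin]
      omega
    obtain ⟨b, hb, hbmax⟩ := exists_max_image _ (w (Fin.last k)) hrest
    refine ⟨Fin.snoc p b, Fin.snoc_injective_iff.mpr ⟨hinj, fun ⟨t, ht⟩ => ?_⟩,
      Fin.lastCases ?_ fun t => ?_, Fin.lastCases ?_ fun t => ?_⟩
    · exact (mem_sdiff.mp hb).2 (mem_image.mpr ⟨t, mem_univ _, ht⟩)
    · simpa using (mem_sdiff.mp hb).1
    · simpa using hpR t
    · have hbetter : {b' ∈ R | w (Fin.last k) b < w (Fin.last k) b'} ⊆ univ.image p := by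
        intro b' hb'
        obtain ⟨hb'R, hlt⟩ := mem_filter.mp hb'
        by_contra hb'p
        exact (hbmax b' (mem_sdiff.mpr ⟨hb'R, hb'p⟩)).not_gt hlt
      simpa using (card_le_card hbetter).trans card_image_le
    · simpa using hp t

def antitoneEnum (B : Finset I) (u : I → ℝ) : Fin #B ≃ B :=
  (Tuple.sort fun t => OrderDual.toDual (u (B.equivFin.symm t))).trans B.equivFin.symm

theorem antitone_antitoneEnum (B : Finset I) (u : I → ℝ) :
    Antitone fun t => u (antitoneEnum B u t) :=
  monotone_toDual_comp_iff.mp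
    (Tuple.monotone_sort fun t => OrderDual.toDual (u (B.equivFin.symm t)))

theorem apply_le_of_card_filter_lt_le {k : ℕ} {B : Finset I} {u : I → ℝ} (s : Fin k ↪ I)
    (hsB : ∀ t, s t ∈ B) (hs : Antitone (u ∘ s)) {m : ℝ} {t : Fin k}
    (hcard : #{b ∈ B | m < u b} ≤ t) : u (s t) ≤ m := by
  by_contra! hlt
  have hsub : (Iic t).map s ⊆ {b ∈ B | m < u b} := by
    intro b hb
    obtain ⟨t', ht', rfl⟩ := mem_map.mp hb
    exact mem_filter.mpr ⟨hsB t', hlt.trans_le (hs (mem_Iic.mp ht'))⟩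
  have := card_le_card hsub
  rw [card_map, Fin.card_Iic] at this
  omega

/-- Agent `i` values the `t`-th item of the enumeration `B.equivFin.symm` at her `t`-th largest
value on `B`. -/
def sortedOn (v : N → I → ℝ) (B : Finset I) (i : N) (j : I) : ℝ :=
  if hj : j ∈ B then v i (antitoneEnum B (v i) (B.equivFin ⟨j, hj⟩)) else v i j

section SortedOn

variable (v : N → I → ℝ) (B : Finset I)

theorem sortedOn_of_notMem {i : N} {j : I} (hj : j ∉ B) : sortedOn v B i j = v i j :=
  dif_neg hj

theorem sortedOn_equivFin_symm (i : N) (t : Fin #B) :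
    sortedOn v B i (B.equivFin.symm t) = v i (antitoneEnum B (v i) t) := by
  simp [sortedOn]

theorem sum_sortedOn (i : N) : ∑ j ∈ B, sortedOn v B i j = ∑ j ∈ B, v i j := by
  calc ∑ j ∈ B, sortedOn v B i j = ∑ t, sortedOn v B i (B.equivFin.symm t) := by
        rw [← sum_coe_sort B, ← B.equivFin.symm.sum_comp]
    _ = ∑ t, v i (antitoneEnum B (v i) t) := by simp only [sortedOn_equivFin_symm]
    _ = ∑ j ∈ B, v i j := by
        rw [(antitoneEnum B (v i)).sum_comp fun j => v i j, sum_coe_sort]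

theorem propShare_sortedOn [Fintype N] {M : Finset I} (hBM : B ⊆ M) (i : N) :
    propShare (sortedOn v B) M i = propShare v M i := by
  unfold propShare bval
  rw [← sum_sdiff hBM, ← sum_sdiff hBM (f := v i), sum_sortedOn,
    sum_congr rfl fun j hj => sortedOn_of_notMem v B (mem_sdiff.mp hj).2]

theorem sortedOn_neg {i : N} (hneg : ∀ j ∈ B, v i j < 0) {j : I} (hj : j ∈ B) :
    sortedOn v B i j < 0 := by
  rw [sortedOn, dif_pos hj]
  exact hneg _ (Subtype.prop _)

theorem ido_sortedOn : IDO (sortedOn v B) B := by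
  refine ⟨(List.ofFn fun t => (B.equivFin.symm t : I)).reverse, ?_, ?_, fun i => ?_⟩
  · exact List.nodup_reverse.mpr (List.nodup_ofFn.mpr
      (Subtype.val_injective.comp B.equivFin.symm.injective))
  · ext j
    simp only [List.mem_toFinset, List.mem_reverse, List.mem_ofFn]
    exact ⟨by rintro ⟨t, rfl⟩; exact Subtype.prop _,
      fun hj => ⟨B.equivFin ⟨j, hj⟩, by simp⟩⟩
  · rw [List.map_reverse, List.pairwise_reverse, List.map_ofFn, List.pairwise_ofFn]
    intro t t' htt'
    simp only [Function.comp_apply, sortedOn_equivFin_symm]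
    exact antitone_antitoneEnum B (v i) htt'.le

end SortedOn

/-- `σ` lets the owners of the slots `B.equivFin.symm 0, B.equivFin.symm 1, …` pick, in this
order, their most valuable remaining item of `B`. -/
theorem exists_perm_sortedOn_le [Fintype N] (v : N → I → ℝ) {B M : Finset I}
    {x : N → Finset I} (hx : IsAllocation x M) (hBM : B ⊆ M) :
    ∃ σ : Equiv.Perm I, (∀ j ∉ B, σ j = j) ∧ ∀ i, ∀ c ∈ x i, sortedOn v B i c ≤ v i (σ c) := by
  set e := B.equivFin.symm
  choose owner howner using fun t => hx.exists_mem (hBM (e t).2)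
  obtain ⟨p, hinj, hpB, hp⟩ := exists_greedy_picks B (fun t => v (owner t)) le_rfl
  let π : Fin #B ≃ B := Equiv.ofBijective (fun t => ⟨p t, hpB t⟩)
    ((Fintype.bijective_iff_injective_and_card _).mpr
      ⟨fun t t' h => hinj (congrArg Subtype.val h), by simp⟩)
  refine ⟨Equiv.Perm.ofSubtype (e.symm.trans π),
    fun j hj => Equiv.Perm.ofSubtype_apply_of_not_mem _ hj, fun i c hc => ?_⟩
  by_cases hcB : c ∈ B
  · obtain ⟨t, rfl⟩ : ∃ t, (e t : I) = c := ⟨B.equivFin ⟨c, hcB⟩, by simp [e]⟩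
    rw [sortedOn_equivFin_symm, Equiv.Perm.ofSubtype_apply_coe]
    have hi : owner t = i := hx.eq_of_mem (howner t) hc
    subst hi
    simpa [π] using apply_le_of_card_filter_lt_le
      ((antitoneEnum B (v (owner t))).toEmbedding.trans (Function.Embedding.subtype _))
      (fun t => (antitoneEnum B _ t).2) (antitone_antitoneEnum B _) (hp t)
  · rw [sortedOn_of_notMem v B hcB, Equiv.Perm.ofSubtype_apply_of_not_mem _ hcB]

theorem exists_propMXWith_of_ido {P : ℝ → Prop} [DecidablePred P] (hP : ∀ r < 0, ¬ P r)
    (H : ∀ (N I : Type) [Fintype N] [Fintype I] [Nonempty N] (v : N → I → ℝ) (M : Finset I),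
      (∀ j ∈ M, (∀ i : N, 0 ≤ v i j) ∨ (∀ i : N, v i j < 0)) →
      IDO v (M.filter fun j => ∀ i : N, v i j < 0) →
      ∃ x : N → Finset I, IsAllocation x M ∧ PropMXWith P v M x)
    (N I : Type) [Fintype N] [Fintype I] [Nonempty N] (v : N → I → ℝ) (M : Finset I)
    (hsep : ∀ j ∈ M, (∀ i : N, 0 ≤ v i j) ∨ (∀ i : N, v i j < 0)) :
    ∃ x : N → Finset I, IsAllocation x M ∧ PropMXWith P v M x := by
  set B := M.filter fun j => ∀ i : N, v i j < 0
  have hBM : B ⊆ M := filter_subset _ _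
  have hneg : ∀ i, ∀ j ∈ B, v i j < 0 := fun i j hj => (mem_filter.mp hj).2 i
  have hneg' : ∀ i, ∀ j ∈ B, sortedOn v B i j < 0 := fun i _ => sortedOn_neg v B (hneg i)
  have hsep' : ∀ j ∈ M, (∀ i, 0 ≤ sortedOn v B i j) ∨ (∀ i, sortedOn v B i j < 0) := by
    intro j hj
    by_cases hjB : j ∈ B
    · exact Or.inr fun i => hneg' i j hjB
    · simpa only [sortedOn_of_notMem v B hjB] using hsep j hj
  have hbads : (M.filter fun j => ∀ i, sortedOn v B i j < 0) = B := by
    refine filter_congr fun j _ => ?_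
    by_cases hjB : j ∈ B
    · exact iff_of_true (fun i => hneg' i j hjB) fun i => hneg i j hjB
    · simp only [sortedOn_of_notMem v B hjB]
  obtain ⟨x', hx', hprop⟩ :=
    H N I (sortedOn v B) M hsep' (by rw [hbads]; exact ido_sortedOn v B)
  obtain ⟨σ, hσ, hle⟩ := exists_perm_sortedOn_le v hx' hBM
  refine ⟨_, hx'.map_perm σ fun j hj => ?_, hprop.map_perm hP hσ
    (fun _ _ hj => sortedOn_of_notMem v B hj) hneg hneg' (propShare_sortedOn v B hBM) hle⟩
  by_cases hjB : j ∈ B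
  · exact hBM (Equiv.Perm.apply_mem_of_forall_notMem hσ hjB)
  · rwa [hσ j hjB]

end IDOReduction

/-- If every separable instance with IDO pure bads admits a PropMX
(resp. PropMX₀) allocation, then every separable instance admits a PropMX
(resp. PropMX₀) allocation. -/
theorem ido_reduction_for_separable :
    ((∀ (N I : Type) [Fintype N] [Fintype I] [Nonempty N]
        (v : N → I → ℝ) (M : Finset I),
        (∀ j ∈ M, (∀ i : N, 0 ≤ v i j) ∨ (∀ i : N, v i j < 0)) →
        IDO v (M.filter fun j => ∀ i : N, v i j < 0) →
        ∃ x : N → Finset I, IsAllocation x M ∧ PropMX v M x) →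
      ∀ (N I : Type) [Fintype N] [Fintype I] [Nonempty N]
        (v : N → I → ℝ) (M : Finset I),
        (∀ j ∈ M, (∀ i : N, 0 ≤ v i j) ∨ (∀ i : N, v i j < 0)) →
        ∃ x : N → Finset I, IsAllocation x M ∧ PropMX v M x) ∧
    ((∀ (N I : Type) [Fintype N] [Fintype I] [Nonempty N]
        (v : N → I → ℝ) (M : Finset I),
        (∀ j ∈ M, (∀ i : N, 0 ≤ v i j) ∨ (∀ i : N, v i j < 0)) →
        IDO v (M.filter fun j => ∀ i : N, v i j < 0) →
        ∃ x : N → Finset I, IsAllocation x M ∧ PropMX0 v M x) →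
      ∀ (N I : Type) [Fintype N] [Fintype I] [Nonempty N]
        (v : N → I → ℝ) (M : Finset I),
        (∀ j ∈ M, (∀ i : N, 0 ≤ v i j) ∨ (∀ i : N, v i j < 0)) →
        ∃ x : N → Finset I, IsAllocation x M ∧ PropMX0 v M x) :=
  ⟨exists_propMXWith_of_ido fun _ hr => hr.not_gt,
    exists_propMXWith_of_ido fun _ hr => hr.not_ge⟩
end

section
/- Let x be an EFX allocation of a set S ⊆ M of items, and let j ∈ M \ S be an item with v_{hj} ≤ 0 for every agent h. If i is an agent with v_{ij} = 0, then the allocation x' obtained from x by adding j to the bundle of agent i (x'_i = x_i ∪ {j}, x'_h = x_h for h ≠ i) is an EFX allocation of S ∪ {j}. -/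
open scoped Classical
open Finset

/-! Only the EFX conditions involving `i` change. Agent `i` gains an item worth zero to it,
which affects neither its value nor the set of its bads; every other agent sees `i`'s bundle
gain an item it values non-positively, which can only lower its envy towards `i`. -/

section EFXUpdate

variable {N I : Type*}

/-- The EFX condition for an agent `a` holding `A`, towards another bundle `B`. -/
def EFXPair (v : N → I → ℝ) (a : N) (A B : Finset I) : Prop :=
  (∀ g ∈ B, 0 < v a g → bval v a A ≥ bval v a (B.erase g)) ∨
    (∀ c ∈ A, v a c < 0 → bval v a (A.erase c) ≥ bval v a B)

theorem efx_iff_forall_efxPair (v : N → I → ℝ) (x : N → Finset I) :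
    EFX v x ↔ ∀ a b, EFXPair v a (x a) (x b) :=
  Iff.rfl

variable {v : N → I → ℝ} {a : N} {A B : Finset I} {j : I}

theorem bval_insert (hj : j ∉ A) : bval v a (insert j A) = v a j + bval v a A :=
  sum_insert hj

theorem bval_erase {g : I} (hg : g ∈ A) : bval v a (A.erase g) = bval v a A - v a g :=
  sum_erase_eq_sub hg

theorem EFXPair.self : EFXPair v a A A :=
  Or.inl fun g hg hpos => by rw [bval_erase hg]; linarith

theorem EFXPair.insert_left (h : EFXPair v a A B) (hj : j ∉ A) (hv : 0 ≤ v a j) :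
    EFXPair v a (insert j A) B := by
  rcases h with hgood | hbad
  · exact Or.inl fun g hg hpos => by rw [bval_insert hj]; linarith [hgood g hg hpos]
  · refine Or.inr fun c hc hneg => ?_
    obtain rfl | hc := mem_insert.mp hc
    · linarith
    · have hjc : j ≠ c := by rintro rfl; linarith
      have hj' : j ∉ A.erase c := fun hmem => hj (mem_of_mem_erase hmem)
      rw [erase_insert_of_ne hjc, bval_insert hj']
      linarith [hbad c hc hneg]

theorem EFXPair.insert_right (h : EFXPair v a A B) (hj : j ∉ B) (hv : v a j ≤ 0) :
    EFXPair v a A (insert j B) := by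
  rcases h with hgood | hbad
  · refine Or.inl fun g hg hpos => ?_
    obtain rfl | hg := mem_insert.mp hg
    · linarith
    · have hjg : j ≠ g := by rintro rfl; linarith
      have hj' : j ∉ B.erase g := fun hmem => hj (mem_of_mem_erase hmem)
      rw [erase_insert_of_ne hjg, bval_insert hj']
      linarith [hgood g hg hpos]
  · exact Or.inr fun c hc hneg => by rw [bval_insert hj]; linarith [hbad c hc hneg]

theorem EFX.update_insert {x : N → Finset I} {i : N} (hEFX : EFX v x) (hj : j ∉ x i)
    (hi : 0 ≤ v i j) (hothers : ∀ a ≠ i, v a j ≤ 0) :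
    EFX v (Function.update x i (insert j (x i))) := by
  rw [efx_iff_forall_efxPair] at hEFX ⊢
  intro a b
  rcases eq_or_ne a i with rfl | ha <;> rcases eq_or_ne b a with rfl | hb
  · exact EFXPair.self
  · rw [Function.update_self, Function.update_of_ne hb]
    exact (hEFX a b).insert_left hj hi
  · rw [Function.update_of_ne ha]
    exact EFXPair.self
  · rw [Function.update_of_ne ha]
    rcases eq_or_ne b i with rfl | hbi
    · rw [Function.update_self]
      exact (hEFX a b).insert_right hj (hothers a ha)
    · rw [Function.update_of_ne hbi]
      exact hEFX a b

theorem IsAllocation.notMem [Fintype N] {x : N → Finset I} {S : Finset I}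
    (hx : IsAllocation x S) (hj : j ∉ S) (h : N) : j ∉ x h := fun hmem =>
  hj (hx.2 ▸ mem_biUnion.mpr ⟨h, mem_univ h, hmem⟩)

theorem IsAllocation.update_insert [Fintype N] {x : N → Finset I} {S : Finset I}
    (hx : IsAllocation x S) (hj : j ∉ S) (i : N) :
    IsAllocation (Function.update x i (insert j (x i))) (insert j S) := by
  refine ⟨fun a b hab => ?_, ?_⟩
  · rcases eq_or_ne a i with rfl | ha
    · rw [Function.update_self, Function.update_of_ne hab.symm, disjoint_insert_left]
      exact ⟨hx.notMem hj b, hx.1 a b hab⟩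
    · rw [Function.update_of_ne ha]
      rcases eq_or_ne b i with rfl | hb
      · rw [Function.update_self, disjoint_insert_right]
        exact ⟨hx.notMem hj a, hx.1 a b hab⟩
      · rw [Function.update_of_ne hb]
        exact hx.1 a b hab
  · rw [← hx.2]
    ext k
    simp only [mem_biUnion, mem_univ, true_and, mem_insert, Function.update_apply]
    constructor
    · rintro ⟨h, hk⟩
      split_ifs at hk with hh
      · subst hh
        exact (mem_insert.mp hk).imp id fun hk => ⟨h, hk⟩
      · exact Or.inr ⟨h, hk⟩
    · rintro (rfl | ⟨h, hk⟩)
      · exact ⟨i, by simp⟩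
      · by_cases hh : h = i
        · exact ⟨i, by subst hh; simp [hk]⟩
        · exact ⟨h, by simp [hh, hk]⟩

end EFXUpdate

theorem efx_preserved_adding_zero_item_general {N I : Type*} [Fintype N]
    (v : N → I → ℝ) (M S : Finset I) (x : N → Finset I) (j : I) (i : N)
    (hx : IsAllocation x S) (hEFX : EFX v x)
    (hj : j ∈ M \ S) (hneg : ∀ h : N, v h j ≤ 0) (hzero : v i j = 0) :
    IsAllocation (Function.update x i (insert j (x i))) (insert j S) ∧
      EFX v (Function.update x i (insert j (x i))) := by
  have hjS : j ∉ S := (mem_sdiff.mp hj).2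
  exact ⟨hx.update_insert hjS i,
    hEFX.update_insert (hx.notMem hjS i) hzero.ge fun a _ => hneg a⟩

/-- Adding an item `j ∈ M \ S` that no agent values positively to
the bundle of an agent `i` with `v i j = 0` preserves EFX. -/
theorem efx_preserved_adding_zero_item {N I : Type*} [Fintype N] [Fintype I] [Nonempty N]
    (v : N → I → ℝ) (M S : Finset I) (x : N → Finset I) (j : I) (i : N)
    (hS : S ⊆ M) (hx : IsAllocation x S) (hEFX : EFX v x)
    (hj : j ∈ M \ S) (hneg : ∀ h : N, v h j ≤ 0) (hzero : v i j = 0) :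
    IsAllocation (Function.update x i (insert j (x i))) (insert j S) ∧
      EFX v (Function.update x i (insert j (x i))) :=
  efx_preserved_adding_zero_item_general v M S x j i hx hEFX hj hneg hzero
end
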